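/- arXiv:1109.2848 — 2 statements merged into one kernel-verified Lean document; each statement's English description precedes it below -/
import Mathlib

section
/- Let N : ℕ and ρ : Fin N → ℂ with ρ ≠ 0 and ξ(ρ) < 1. Then the potential equals the modulus square of the Hermitian projection: Φ(ρ) = ‖P_h(ρ)‖². (Toy-model form of Proposition 3, item 3, equation (PhiIsModSqu): the potential is the pullback of the Kähler potential ‖λ‖² along the projection P_h.) -/
/-!
Write `s = √(1 - ξ)`, so `ξ = (1 - s)(1 + s)`. Since `B(ρ,ρ) = ζ‖ρ‖²`, expanding
`‖ρ - (ζ/(1+s)) ρ̄‖²` gives `‖ρ‖²(1 - 2ξ/(1+s) + ξ/(1+s)²) = 2s²‖ρ‖²/(1+s)`, and the factor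
`h(ξ)² = (1+s)²/(4s²)` turns this into `‖ρ‖²(1+s)/2 = Φ(ρ)`.
-/

noncomputable section

open scoped BigOperators

namespace PureSpinorToy

variable {N : ℕ}

/-- Complex bilinear pairing `B(ρ,σ) = ∑ I, ρ_I σ_I`. -/
def B (ρ σ : Fin N → ℂ) : ℂ := ∑ I, ρ I * σ I

/-- Hermitian inner product `⟪ρ,σ⟫ = ∑ I, conj(ρ_I) σ_I`. -/
def hInner (ρ σ : Fin N → ℂ) : ℂ := ∑ I, (starRingEnd ℂ) (ρ I) * σ I

/-- Norm square `‖ρ‖² = ⟪ρ,ρ⟫` (a nonnegative real). -/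
def nsq (ρ : Fin N → ℂ) : ℝ := (hInner ρ ρ).re

/-- Componentwise complex conjugation `ρ̄`. -/
def conjFun (ρ : Fin N → ℂ) : Fin N → ℂ := fun I => (starRingEnd ℂ) (ρ I)

/-- `ζ(ρ) = B(ρ,ρ)/‖ρ‖²`. -/
def zeta (ρ : Fin N → ℂ) : ℂ := B ρ ρ / (nsq ρ : ℂ)

/-- `ξ(ρ) = |ζ(ρ)|²`. -/
def xi (ρ : Fin N → ℂ) : ℝ := Complex.normSq (zeta ρ)

/-- The family of projection maps
`P_f(ρ) = f(ξ(ρ)) • (ρ − (ζ(ρ)/(1+√(1−ξ(ρ)))) • ρ̄)`. -/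
def P (f : ℝ → ℂ) (ρ : Fin N → ℂ) : Fin N → ℂ :=
  f (xi ρ) • (ρ - (zeta ρ / (1 + (Real.sqrt (1 - xi ρ) : ℂ))) • conjFun ρ)

/-- The special function `h(t) = (1+√(1−t))/(2√(1−t))`. -/
def h (t : ℝ) : ℂ := (((1 + Real.sqrt (1 - t)) / (2 * Real.sqrt (1 - t)) : ℝ) : ℂ)

/-- The potential `Φ(ρ) = (‖ρ‖²/2)(1+√(1−ξ(ρ)))`. -/
def Phi (ρ : Fin N → ℂ) : ℝ := (nsq ρ / 2) * (1 + Real.sqrt (1 - xi ρ))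

lemma nsq_eq_sum_normSq (ρ : Fin N → ℂ) : nsq ρ = ∑ I, Complex.normSq (ρ I) := by
  simp [nsq, hInner, ← Complex.normSq_eq_conj_mul_self]

lemma nsq_eq_zero_iff {ρ : Fin N → ℂ} : nsq ρ = 0 ↔ ρ = 0 := by
  rw [nsq_eq_sum_normSq, Finset.sum_eq_zero_iff_of_nonneg fun I _ => Complex.normSq_nonneg _]
  simp [funext_iff]

lemma nsq_smul (a : ℂ) (ρ : Fin N → ℂ) : nsq (a • ρ) = Complex.normSq a * nsq ρ := by
  simp [nsq_eq_sum_normSq, Finset.mul_sum]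

lemma nsq_sub_smul_conjFun (c : ℂ) (ρ : Fin N → ℂ) :
    nsq (ρ - c • conjFun ρ) =
      nsq ρ - 2 * ((starRingEnd ℂ) c * B ρ ρ).re + Complex.normSq c * nsq ρ := by
  simp only [nsq_eq_sum_normSq, B, Finset.mul_sum, Complex.re_sum, ← Finset.sum_sub_distrib,
    ← Finset.sum_add_distrib]
  refine Finset.sum_congr rfl fun I _ => ?_
  simp only [Pi.sub_apply, Pi.smul_apply, smul_eq_mul, conjFun, Complex.normSq_sub,
    Complex.normSq_conj, map_mul, Complex.conj_conj]
  ring_nf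

lemma B_self_eq_zeta_mul_nsq (ρ : Fin N → ℂ) : B ρ ρ = zeta ρ * nsq ρ := by
  rcases eq_or_ne ρ 0 with rfl | hρ
  · simp [B, nsq_eq_zero_iff]
  · have : (nsq ρ : ℂ) ≠ 0 := Complex.ofReal_ne_zero.mpr (nsq_eq_zero_iff.not.mpr hρ)
    rw [zeta, div_mul_cancel₀ _ this]

lemma nsq_sub_zeta_div_smul_conjFun (ρ : Fin N → ℂ) (s : ℝ) :
    nsq (ρ - (zeta ρ / (1 + (s : ℂ))) • conjFun ρ) =
      nsq ρ * (1 - 2 * xi ρ / (1 + s) + xi ρ / (1 + s) ^ 2) := by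
  have hcross : (starRingEnd ℂ) (zeta ρ / (1 + s)) * B ρ ρ =
      ((xi ρ * nsq ρ / (1 + s) : ℝ) : ℂ) := by
    rw [B_self_eq_zeta_mul_nsq, xi, map_div₀, map_add, map_one, Complex.conj_ofReal]
    push_cast
    rw [Complex.normSq_eq_conj_mul_self]
    ring
  have hnormSq : Complex.normSq (zeta ρ / (1 + s)) = xi ρ / (1 + s) ^ 2 := by
    rw [Complex.normSq_div, xi, ← Complex.ofReal_one, ← Complex.ofReal_add,
      Complex.normSq_ofReal, sq]
  rw [nsq_sub_smul_conjFun, hcross, Complex.ofReal_re, hnormSq]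
  ring

theorem statement9_general {N : ℕ} (ρ : Fin N → ℂ) (hξ : xi ρ < 1) :
    Phi ρ = nsq (P h ρ) := by
  set s := Real.sqrt (1 - xi ρ) with hs_def
  have hs : 0 < s := Real.sqrt_pos.mpr (by linarith)
  have hξs : xi ρ = 1 - s ^ 2 := by rw [Real.sq_sqrt (by linarith)]; ring
  rw [P, nsq_smul, nsq_sub_zeta_div_smul_conjFun, h, Complex.normSq_ofReal, Phi, ← hs_def, hξs]
  field_simp
  ring

/-- Toy model, Proposition 3 item 3 (PhiIsModSqu): the potential equals the modulus
square of the Hermitian projection. -/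
theorem statement9 {N : ℕ} (ρ : Fin N → ℂ) (hρ : ρ ≠ 0) (hξ : xi ρ < 1) :
    Phi ρ = nsq (P h ρ) :=
  statement9_general ρ hξ

end PureSpinorToy
end
end

section
/- Let N : ℕ, let f : ℝ → ℂ be differentiable at ξ(ρ), and let ρ : Fin N → ℂ with ρ ≠ 0 and ξ(ρ) < 1. Then P_f is Fréchet differentiable over ℝ at ρ, and the trace over ℂ of the ℂ-linear part of its derivative equals (N − 1)·f(ξ) − 2·(1 − ξ)·(1 − √(1 − ξ))·f′(ξ), where ξ := ξ(ρ) and f′(ξ) := deriv f at ξ. (Toy-model trace formula (toy:trace), the analogue of Proposition 2, item 6.) -/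
noncomputable section

open scoped BigOperators

/-!
An ℝ-linear map `L` between complex vector spaces splits as `L = a + r` with `a` ℂ-linear and `r`
ℂ-antilinear, and `a` is its ℂ-linear part. Differentiating `P_f(ρ) = f(ξ) • (ρ - κ • ρ̄)` with
`κ = ζ / (1 + √(1 - ξ))`, the term `κ • v̄` is antilinear, so the ℂ-linear part of the derivative is
`f(ξ) • (id - ∂κ ⊗ ρ̄) + f'(ξ) • ∂ξ ⊗ (ρ - κ • ρ̄)`, where `∂` is the ℂ-linear part of a derivative
(the Wirtinger derivative). Its trace is `f(ξ) (N - ∂κ(ρ̄)) + f'(ξ) ∂ξ(ρ - κ • ρ̄)`. Now `∂ξ(ρ) = 0`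
because `ξ` is invariant under `ρ ↦ λ ρ`, while `∂ξ(ρ̄) = 2 (1 - ξ) ζ̄` and `∂κ(ρ̄) = 1` by direct
computation; finally `κ ζ̄ = ξ / (1 + √(1 - ξ)) = 1 - √(1 - ξ)`.
-/

open Complex

section ComplexLinearPart

variable {V W : Type*} [AddCommGroup V] [Module ℂ V] [Module ℝ V] [IsScalarTower ℝ ℂ V]
  [AddCommGroup W] [Module ℂ W] [Module ℝ W] [IsScalarTower ℝ ℂ W]

lemma smul_eq_re_smul_add_im_smul (c : ℂ) (v : V) : c • v = c.re • v + c.im • (I • v) := by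
  rw [← algebraMap_smul ℂ c.re v, ← algebraMap_smul ℂ c.im, smul_smul, ← add_smul]
  simp

lemma LinearMap.map_complex_smul (L : V →ₗ[ℝ] W) (c : ℂ) (v : V) :
    L (c • v) = (c.re : ℂ) • L v + (c.im : ℂ) • L (I • v) := by
  rw [smul_eq_re_smul_add_im_smul, map_add, map_smul, map_smul, ← algebraMap_smul ℂ c.re,
    ← algebraMap_smul ℂ c.im (L _)]
  rfl

def clinPart (L : V →ₗ[ℝ] W) : V →ₗ[ℂ] W where
  toFun v := (2 : ℂ)⁻¹ • (L v - I • L (I • v))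
  map_add' v w := by simp only [smul_add, map_add]; module
  map_smul' c v := by
    have h := L.map_complex_smul c (I • v)
    rw [smul_smul I I, I_mul_I, neg_one_smul, map_neg] at h
    rw [RingHom.id_apply, smul_comm I c, h, L.map_complex_smul]
    conv_rhs => rw [← re_add_im c]
    linear_combination (norm := module) I_mul_I • ((2 : ℂ)⁻¹ * c.im) • L (I • v)

lemma clinPart_apply (L : V →ₗ[ℝ] W) (v : V) :
    clinPart L v = (2 : ℂ)⁻¹ • (L v - I • L (I • v)) := rfl

lemma sub_clinPart_apply_I_smul (L : V →ₗ[ℝ] W) (v : V) :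
    L (I • v) - clinPart L (I • v) = -(I • (L v - clinPart L v)) := by
  rw [(clinPart L).map_smul, clinPart_apply]
  linear_combination (norm := module) I_mul_I • L (I • v)

lemma clinPart_apply_eq {L : V →ₗ[ℝ] W} {a r : V → W} (hL : ∀ v, L v = a v + r v)
    (ha : ∀ v, a (I • v) = I • a v) (hr : ∀ v, r (I • v) = -(I • r v)) (v : V) :
    clinPart L v = a v := by
  rw [clinPart_apply, hL, hL, ha, hr]
  linear_combination (norm := module) I_mul_I • ((2 : ℂ)⁻¹ • r v - (2 : ℂ)⁻¹ • a v)

end ComplexLinearPart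

namespace PureSpinorToy

open ComplexConjugate

variable {N : ℕ}

lemma B_smul (ρ v : Fin N → ℂ) (c : ℂ) : B ρ (c • v) = c * B ρ v := by
  simp [B, Finset.mul_sum, mul_left_comm]

lemma hInner_smul (ρ v : Fin N → ℂ) (c : ℂ) : hInner ρ (c • v) = c * hInner ρ v := by
  simp [hInner, Finset.mul_sum, mul_left_comm]

lemma conjFun_smul (c : ℂ) (v : Fin N → ℂ) : conjFun (c • v) = conj c • conjFun v := by
  ext; simp [conjFun]

lemma conjFun_eq_star (σ : Fin N → ℂ) : conjFun σ = star σ := rfl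

lemma nsq_eq_sum_norm_sq (σ : Fin N → ℂ) : nsq σ = ∑ I, ‖σ I‖ ^ 2 := by
  simp [nsq, hInner, Complex.re_sum, ← Complex.normSq_eq_norm_sq, Complex.normSq_apply]

lemma nsq_pos {ρ : Fin N → ℂ} (hρ : ρ ≠ 0) : 0 < nsq ρ := by
  obtain ⟨I, hI⟩ := Function.ne_iff.mp hρ
  rw [nsq_eq_sum_norm_sq]
  exact Finset.sum_pos' (fun _ _ => by positivity) ⟨I, Finset.mem_univ I, by positivity⟩

lemma ofReal_nsq_ne_zero {ρ : Fin N → ℂ} (hρ : ρ ≠ 0) : (nsq ρ : ℂ) ≠ 0 :=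
  ofReal_ne_zero.mpr (nsq_pos hρ).ne'

lemma hInner_self (ρ : Fin N → ℂ) : hInner ρ ρ = nsq ρ := by
  have h : hInner ρ ρ = ((∑ I, normSq (ρ I) : ℝ) : ℂ) := by
    simp [hInner, normSq_eq_conj_mul_self]
  rw [nsq, h, ofReal_re]

lemma B_conjFun (ρ : Fin N → ℂ) : B ρ (conjFun ρ) = nsq ρ := by
  rw [← hInner_self]
  simp [B, hInner, conjFun, mul_comm]

lemma hInner_conjFun (ρ : Fin N → ℂ) : hInner ρ (conjFun ρ) = conj (B ρ ρ) := by
  simp [hInner, B, conjFun]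

lemma B_self_eq {ρ : Fin N → ℂ} (hρ : ρ ≠ 0) : B ρ ρ = zeta ρ * nsq ρ := by
  have := ofReal_nsq_ne_zero hρ
  rw [zeta]
  field_simp

lemma zeta_eq_smul (σ : Fin N → ℂ) : zeta σ = (nsq σ)⁻¹ • B σ σ := by
  rw [zeta, Complex.real_smul, div_eq_inv_mul, ofReal_inv]

lemma xi_eq_norm_sq (σ : Fin N → ℂ) : xi σ = ‖zeta σ‖ ^ 2 := Complex.normSq_eq_norm_sq _

lemma ofReal_xi (ρ : Fin N → ℂ) : (xi ρ : ℂ) = conj (zeta ρ) * zeta ρ :=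
  Complex.normSq_eq_conj_mul_self

lemma one_add_ofReal_sqrt_ne_zero (t : ℝ) : (1 + Real.sqrt t : ℂ) ≠ 0 := by
  exact_mod_cast (by positivity : 1 + Real.sqrt t ≠ 0)

lemma ofReal_sqrt_one_sub_xi_sq {ρ : Fin N → ℂ} (hξ : xi ρ < 1) :
    (Real.sqrt (1 - xi ρ) : ℂ) ^ 2 = 1 - xi ρ := by
  exact_mod_cast Real.sq_sqrt (by linarith : 0 ≤ 1 - xi ρ)

def kappa (σ : Fin N → ℂ) : ℂ := zeta σ / (1 + (Real.sqrt (1 - xi σ) : ℂ))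

lemma kappa_eq_smul (σ : Fin N → ℂ) : kappa σ = (1 + Real.sqrt (1 - xi σ))⁻¹ • zeta σ := by
  rw [kappa, Complex.real_smul, div_eq_inv_mul]
  push_cast
  rfl

lemma kappa_mul_conj_zeta {ρ : Fin N → ℂ} (hξ : xi ρ < 1) :
    kappa ρ * conj (zeta ρ) = 1 - Real.sqrt (1 - xi ρ) := by
  rw [kappa, div_mul_eq_mul_div, mul_comm, ← ofReal_xi,
    div_eq_iff (one_add_ofReal_sqrt_ne_zero _)]
  linear_combination ofReal_sqrt_one_sub_xi_sq hξ

lemma differentiable_B_self : Differentiable ℝ (fun σ : Fin N → ℂ => B σ σ) := by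
  unfold B
  fun_prop

lemma fderiv_B_self_apply (ρ v : Fin N → ℂ) : fderiv ℝ (fun σ => B σ σ) ρ v = 2 * B ρ v := by
  have h : HasFDerivAt (fun σ : Fin N → ℂ => B σ σ) _ ρ :=
    HasFDerivAt.fun_sum fun I _ => (hasFDerivAt_apply (𝕜 := ℝ) I ρ).mul (hasFDerivAt_apply I ρ)
  rw [h.fderiv]
  simp [B, Finset.mul_sum, two_mul]

lemma differentiable_nsq : Differentiable ℝ (nsq (N := N)) := by
  rw [funext nsq_eq_sum_norm_sq]
  exact Differentiable.fun_sum fun I _ => (differentiable_apply I).norm_sq ℝ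

lemma fderiv_nsq_apply (ρ v : Fin N → ℂ) : fderiv ℝ nsq ρ v = 2 * (hInner ρ v).re := by
  have h : HasFDerivAt (fun σ : Fin N → ℂ => ∑ I, ‖σ I‖ ^ 2) _ ρ :=
    HasFDerivAt.fun_sum fun I _ => (hasFDerivAt_apply I ρ).norm_sq
  rw [funext nsq_eq_sum_norm_sq, h.fderiv]
  simp [hInner, Complex.re_sum, Finset.mul_sum, Complex.inner]
  exact Finset.sum_congr rfl fun _ _ => by ring

lemma differentiableAt_zeta {ρ : Fin N → ℂ} (hρ : ρ ≠ 0) : DifferentiableAt ℝ zeta ρ := by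
  rw [funext zeta_eq_smul]
  exact ((differentiable_nsq ρ).inv (nsq_pos hρ).ne').smul (differentiable_B_self ρ)

lemma fderiv_zeta_apply {ρ : Fin N → ℂ} (hρ : ρ ≠ 0) (v : Fin N → ℂ) :
    fderiv ℝ zeta ρ v = (2 * B ρ v - zeta ρ * (2 * (hInner ρ v).re)) / nsq ρ := by
  have h := ((hasDerivAt_inv (nsq_pos hρ).ne').comp_hasFDerivAt ρ
    (differentiable_nsq ρ).hasFDerivAt).smul (differentiable_B_self ρ).hasFDerivAt
  rw [(h.congr_of_eventuallyEq (.of_forall zeta_eq_smul)).fderiv]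
  have := ofReal_nsq_ne_zero hρ
  simp [fderiv_B_self_apply, fderiv_nsq_apply, zeta]
  field_simp
  ring

lemma differentiableAt_xi {ρ : Fin N → ℂ} (hρ : ρ ≠ 0) : DifferentiableAt ℝ xi ρ := by
  rw [funext xi_eq_norm_sq]
  exact (differentiableAt_zeta hρ).norm_sq ℝ

lemma fderiv_xi_apply {ρ : Fin N → ℂ} (hρ : ρ ≠ 0) (v : Fin N → ℂ) :
    fderiv ℝ xi ρ v = 2 * (conj (zeta ρ) * fderiv ℝ zeta ρ v).re := by
  rw [funext xi_eq_norm_sq, (differentiableAt_zeta hρ).hasFDerivAt.norm_sq.fderiv]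
  simp [Complex.inner, mul_comm]
  ring

lemma differentiableAt_kappa {ρ : Fin N → ℂ} (hρ : ρ ≠ 0) (hξ : xi ρ < 1) :
    DifferentiableAt ℝ kappa ρ := by
  rw [funext kappa_eq_smul]
  exact ((((differentiableAt_xi hρ).const_sub 1).sqrt (by linarith)).const_add 1 |>.inv
    (by positivity)).smul (differentiableAt_zeta hρ)

lemma fderiv_kappa_apply {ρ : Fin N → ℂ} (hρ : ρ ≠ 0) (hξ : xi ρ < 1) (v : Fin N → ℂ) :
    fderiv ℝ kappa ρ v = fderiv ℝ zeta ρ v / (1 + Real.sqrt (1 - xi ρ))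
      + zeta ρ * fderiv ℝ xi ρ v
        / (2 * Real.sqrt (1 - xi ρ) * (1 + Real.sqrt (1 - xi ρ)) ^ 2) := by
  have hsqrt := (Real.hasDerivAt_sqrt (by linarith : 1 - xi ρ ≠ 0)).comp_hasFDerivAt ρ
    ((differentiableAt_xi hρ).hasFDerivAt.const_sub 1)
  have h := ((hasDerivAt_inv (by positivity : 1 + Real.sqrt (1 - xi ρ) ≠ 0)).comp_hasFDerivAt ρ
    (hsqrt.const_add 1)).smul (differentiableAt_zeta hρ).hasFDerivAt
  rw [(h.congr_of_eventuallyEq (.of_forall kappa_eq_smul)).fderiv]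
  have : (Real.sqrt (1 - xi ρ) : ℂ) ≠ 0 := ofReal_ne_zero.mpr (Real.sqrt_pos.mpr (by linarith)).ne'
  have := one_add_ofReal_sqrt_ne_zero (1 - xi ρ)
  simp
  field_simp

lemma differentiableAt_P {f : ℝ → ℂ} {ρ : Fin N → ℂ} (hρ : ρ ≠ 0) (hξ : xi ρ < 1)
    (hfd : DifferentiableAt ℝ f (xi ρ)) : DifferentiableAt ℝ (P f) ρ :=
  (hfd.comp ρ (differentiableAt_xi hρ)).smul
    (differentiableAt_id.sub ((differentiableAt_kappa hρ hξ).smul differentiableAt_id.star))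

lemma fderiv_P_apply {f : ℝ → ℂ} {ρ : Fin N → ℂ} (hρ : ρ ≠ 0) (hξ : xi ρ < 1)
    (hfd : DifferentiableAt ℝ f (xi ρ)) (v : Fin N → ℂ) :
    fderiv ℝ (P f) ρ v = f (xi ρ) • (v - (kappa ρ • conjFun v + fderiv ℝ kappa ρ v • conjFun ρ))
      + (fderiv ℝ xi ρ v * deriv f (xi ρ)) • (ρ - kappa ρ • conjFun ρ) := by
  have h : HasFDerivAt (P f) _ ρ :=
    (hfd.hasDerivAt.hasFDerivAt.comp ρ (differentiableAt_xi hρ).hasFDerivAt).smul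
      ((hasFDerivAt_id (𝕜 := ℝ) ρ).sub
        ((differentiableAt_kappa hρ hξ).hasFDerivAt.smul (hasFDerivAt_id ρ).star))
  rw [h.fderiv]
  simp [conjFun_eq_star]
  rfl

lemma clinPart_fderiv_zeta_apply {ρ : Fin N → ℂ} (hρ : ρ ≠ 0) (v : Fin N → ℂ) :
    clinPart (fderiv ℝ zeta ρ : (Fin N → ℂ) →ₗ[ℝ] ℂ) v
      = (2 * B ρ v - zeta ρ * hInner ρ v) / nsq ρ := by
  refine clinPart_apply_eq (a := fun v => (2 * B ρ v - zeta ρ * hInner ρ v) / nsq ρ)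
    (r := fun v => -(zeta ρ * conj (hInner ρ v)) / nsq ρ) (fun v => ?_) (fun v => ?_)
    (fun v => ?_) v
  · simp only [ContinuousLinearMap.coe_coe, fderiv_zeta_apply hρ, re_eq_add_conj]
    ring
  · simp only [B_smul, hInner_smul, smul_eq_mul]
    ring
  · simp only [hInner_smul, map_mul, conj_I, smul_eq_mul]
    ring

lemma clinPart_fderiv_xi_apply {ρ : Fin N → ℂ} (hρ : ρ ≠ 0) (v : Fin N → ℂ) :
    clinPart (ofRealCLM ∘L fderiv ℝ xi ρ : (Fin N → ℂ) →ₗ[ℝ] ℂ) v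
      = 2 * (conj (zeta ρ) * B ρ v - xi ρ * hInner ρ v) / nsq ρ := by
  refine clinPart_apply_eq
    (a := fun v => 2 * (conj (zeta ρ) * B ρ v - xi ρ * hInner ρ v) / nsq ρ)
    (r := fun v => conj (2 * (conj (zeta ρ) * B ρ v - xi ρ * hInner ρ v) / nsq ρ))
    (fun v => ?_) (fun v => ?_) (fun v => ?_) v
  · simp only [ContinuousLinearMap.coe_coe, ContinuousLinearMap.comp_apply, ofRealCLM_apply,
      fderiv_xi_apply hρ, fderiv_zeta_apply hρ]
    push_cast
    simp only [re_eq_add_conj, map_add, map_mul, map_sub, map_div₀, conj_conj, conj_ofReal,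
      map_ofNat, ofReal_xi]
    ring
  · simp only [B_smul, hInner_smul, smul_eq_mul]
    ring
  · simp only [B_smul, hInner_smul, map_mul, map_div₀, map_sub, conj_I, smul_eq_mul]
    ring

lemma clinPart_fderiv_kappa_apply {ρ : Fin N → ℂ} (hρ : ρ ≠ 0) (hξ : xi ρ < 1) (v : Fin N → ℂ) :
    clinPart (fderiv ℝ kappa ρ : (Fin N → ℂ) →ₗ[ℝ] ℂ) v
      = clinPart (fderiv ℝ zeta ρ : (Fin N → ℂ) →ₗ[ℝ] ℂ) v / (1 + Real.sqrt (1 - xi ρ))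
        + zeta ρ * clinPart (ofRealCLM ∘L fderiv ℝ xi ρ : (Fin N → ℂ) →ₗ[ℝ] ℂ) v
          / (2 * Real.sqrt (1 - xi ρ) * (1 + Real.sqrt (1 - xi ρ)) ^ 2) := by
  simp only [clinPart_apply, ContinuousLinearMap.coe_coe, ContinuousLinearMap.comp_apply,
    ofRealCLM_apply, fderiv_kappa_apply hρ hξ, smul_eq_mul]
  ring

lemma clinPart_fderiv_xi_self {ρ : Fin N → ℂ} (hρ : ρ ≠ 0) :
    clinPart (ofRealCLM ∘L fderiv ℝ xi ρ : (Fin N → ℂ) →ₗ[ℝ] ℂ) ρ = 0 := by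
  rw [clinPart_fderiv_xi_apply hρ, B_self_eq hρ, hInner_self, ofReal_xi]
  ring

lemma clinPart_fderiv_xi_conjFun {ρ : Fin N → ℂ} (hρ : ρ ≠ 0) :
    clinPart (ofRealCLM ∘L fderiv ℝ xi ρ : (Fin N → ℂ) →ₗ[ℝ] ℂ) (conjFun ρ)
      = 2 * (1 - xi ρ) * conj (zeta ρ) := by
  have := ofReal_nsq_ne_zero hρ
  rw [clinPart_fderiv_xi_apply hρ, B_conjFun, hInner_conjFun, B_self_eq hρ, map_mul, conj_ofReal]
  field_simp

lemma clinPart_fderiv_kappa_conjFun {ρ : Fin N → ℂ} (hρ : ρ ≠ 0) (hξ : xi ρ < 1) :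
    clinPart (fderiv ℝ kappa ρ : (Fin N → ℂ) →ₗ[ℝ] ℂ) (conjFun ρ) = 1 := by
  have := ofReal_nsq_ne_zero hρ
  have : (Real.sqrt (1 - xi ρ) : ℂ) ≠ 0 := ofReal_ne_zero.mpr (Real.sqrt_pos.mpr (by linarith)).ne'
  have := one_add_ofReal_sqrt_ne_zero (1 - xi ρ)
  have hsq := ofReal_sqrt_one_sub_xi_sq hξ
  rw [clinPart_fderiv_kappa_apply hρ hξ, clinPart_fderiv_xi_conjFun hρ,
    clinPart_fderiv_zeta_apply hρ, B_conjFun, hInner_conjFun, B_self_eq hρ, map_mul, conj_ofReal]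
  field_simp
  rw [ofReal_xi] at hsq ⊢
  linear_combination (-(zeta ρ * conj (zeta ρ)) - Real.sqrt (1 - xi ρ)) * hsq

lemma clinPart_fderiv_P {f : ℝ → ℂ} {ρ : Fin N → ℂ} (hρ : ρ ≠ 0) (hξ : xi ρ < 1)
    (hfd : DifferentiableAt ℝ f (xi ρ)) :
    clinPart (fderiv ℝ (P f) ρ : (Fin N → ℂ) →ₗ[ℝ] (Fin N → ℂ))
      = f (xi ρ) • (LinearMap.id
          - (clinPart (fderiv ℝ kappa ρ : (Fin N → ℂ) →ₗ[ℝ] ℂ)).smulRight (conjFun ρ))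
        + (deriv f (xi ρ) • clinPart (ofRealCLM ∘L fderiv ℝ xi ρ : (Fin N → ℂ) →ₗ[ℝ] ℂ)).smulRight
          (ρ - kappa ρ • conjFun ρ) := by
  set Lκ := ((fderiv ℝ kappa ρ : (Fin N → ℂ) →L[ℝ] ℂ) : (Fin N → ℂ) →ₗ[ℝ] ℂ)
  set Lξ := ((ofRealCLM ∘L fderiv ℝ xi ρ : (Fin N → ℂ) →L[ℝ] ℂ) : (Fin N → ℂ) →ₗ[ℝ] ℂ)
  refine LinearMap.ext fun v => clinPart_apply_eq
    (r := fun v => -(f (xi ρ) • (kappa ρ • conjFun v + (Lκ v - clinPart Lκ v) • conjFun ρ))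
      + (deriv f (xi ρ) * (Lξ v - clinPart Lξ v)) • (ρ - kappa ρ • conjFun ρ))
    (fun v => ?_) (fun v => LinearMap.map_smul _ I v) (fun v => ?_) v
  · simp only [Lκ, Lξ, ContinuousLinearMap.coe_coe, fderiv_P_apply hρ hξ hfd,
      LinearMap.add_apply, LinearMap.smul_apply, LinearMap.sub_apply, LinearMap.smulRight_apply,
      LinearMap.id_apply, ContinuousLinearMap.comp_apply, ofRealCLM_apply, smul_eq_mul]
    module
  · simp only [conjFun_smul, sub_clinPart_apply_I_smul, conj_I, smul_eq_mul]
    module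

/-- Toy model trace formula (toy:trace), analogue of Proposition 2 item 6: the trace
over ℂ of the ℂ-linear part of the Jacobian of `P_f` at `ρ` equals
`(N−1)·f(ξ) − 2(1−ξ)(1−√(1−ξ))·f′(ξ)`. -/
theorem statement16 {N : ℕ} (f : ℝ → ℂ) (ρ : Fin N → ℂ) (hρ : ρ ≠ 0) (hξ : xi ρ < 1)
    (hfd : DifferentiableAt ℝ f (xi ρ)) :
    DifferentiableAt ℝ (P f) ρ ∧
    ∃ Pc : (Fin N → ℂ) →ₗ[ℂ] (Fin N → ℂ),
      (∀ v, Pc v = (2 : ℂ)⁻¹ •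
          (fderiv ℝ (P f) ρ v - Complex.I • fderiv ℝ (P f) ρ (Complex.I • v))) ∧
      LinearMap.trace ℂ (Fin N → ℂ) Pc
        = ((N : ℂ) - 1) * f (xi ρ)
          - 2 * ((1 - xi ρ : ℝ) : ℂ) * ((1 - Real.sqrt (1 - xi ρ) : ℝ) : ℂ)
            * deriv f (xi ρ) := by
  refine ⟨differentiableAt_P hρ hξ hfd, clinPart (fderiv ℝ (P f) ρ), fun v => rfl, ?_⟩
  rw [clinPart_fderiv_P hρ hξ hfd, map_add, map_smul, map_sub, LinearMap.trace_id,
    LinearMap.trace_smulRight, LinearMap.trace_smulRight, LinearMap.smul_apply, map_sub, map_smul,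
    clinPart_fderiv_kappa_conjFun hρ hξ, clinPart_fderiv_xi_self hρ, clinPart_fderiv_xi_conjFun hρ,
    Module.finrank_fin_fun]
  push_cast
  linear_combination (-2 * (1 - xi ρ) * deriv f (xi ρ)) * kappa_mul_conj_zeta hξ

end PureSpinorToy
end
end
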